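/- arXiv:2102.07301 — 2 statements merged into one kernel-verified Lean document; each statement's English description precedes it below -/
import Mathlib

section
/- If $0 \le \delta' \le 1/2$ and $0 \le \epsilon' \le 1 - 2\delta'$, then $\delta'\log\frac{\delta'}{\delta'+\epsilon'} + (1-\delta')\log\frac{1-\delta'}{1-\delta'-\epsilon'} \le \frac{2(\epsilon')^2}{\delta'}$. -/
/-!
Since `log x ≤ x - 1`, the Bernoulli Kullback–Leibler divergence `KL(p ‖ q)` is bounded by the
χ²-divergence `(p - q)² / (q (1 - q))`. Here `p = δ'` and `q = δ' + ε'` lies in `[δ', 1 - δ']`,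
where `q (1 - q) ≥ δ' (1 - δ') ≥ δ' / 2`.
-/

open Real

lemma mul_log_div_le {a b : ℝ} (ha : 0 ≤ a) (hb : 0 < b) :
    a * log (a / b) ≤ a * (a - b) / b := by
  rcases ha.eq_or_lt with rfl | ha
  · simp
  calc a * log (a / b) ≤ a * (a / b - 1) :=
        mul_le_mul_of_nonneg_left (log_le_sub_one_of_pos (by positivity)) ha.le
    _ = a * (a - b) / b := by field_simp

lemma bernoulli_kl_le_chiSq {p q : ℝ} (hp0 : 0 ≤ p) (hp1 : p ≤ 1) (hq0 : 0 < q) (hq1 : q < 1) :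
    p * log (p / q) + (1 - p) * log ((1 - p) / (1 - q)) ≤ (p - q) ^ 2 / (q * (1 - q)) := by
  have hq1' : 0 < 1 - q := by linarith
  calc p * log (p / q) + (1 - p) * log ((1 - p) / (1 - q))
      ≤ p * (p - q) / q + (1 - p) * ((1 - p) - (1 - q)) / (1 - q) :=
        add_le_add (mul_log_div_le hp0 hq0) (mul_log_div_le (by linarith) hq1')
    _ = (p - q) ^ 2 / (q * (1 - q)) := by field_simp; ring

lemma mul_one_sub_le_mul_one_sub {δ q : ℝ} (hδq : δ ≤ q) (hq : q ≤ 1 - δ) :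
    δ * (1 - δ) ≤ q * (1 - q) := by
  nlinarith [mul_nonneg (sub_nonneg.2 hδq) (sub_nonneg.2 hq)]

theorem stmt_0_general (δ' ε' : ℝ)
    (hδ0 : 0 < δ') (hδ : δ' ≤ 1/2)
    (hε0 : 0 ≤ ε') (hε : ε' ≤ 1 - 2*δ') :
    δ' * Real.log (δ' / (δ' + ε')) + (1 - δ') * Real.log ((1 - δ') / (1 - δ' - ε'))
      ≤ 2 * ε'^2 / δ' := by
  have hvar : δ' / 2 ≤ (δ' + ε') * (1 - δ' - ε') :=
    calc δ' / 2 ≤ δ' * (1 - δ') := by nlinarith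
      _ ≤ (δ' + ε') * (1 - (δ' + ε')) := mul_one_sub_le_mul_one_sub (by linarith) (by linarith)
      _ = (δ' + ε') * (1 - δ' - ε') := by ring
  have hkl := bernoulli_kl_le_chiSq (p := δ') (q := δ' + ε') hδ0.le (by linarith) (by linarith)
    (by linarith)
  simp only [← sub_sub, sub_self, zero_sub, neg_sq] at hkl
  calc _ ≤ ε' ^ 2 / ((δ' + ε') * (1 - δ' - ε')) := hkl
    _ ≤ ε' ^ 2 / (δ' / 2) := div_le_div_of_nonneg_left (sq_nonneg ε') (by positivity) hvar
    _ = 2 * ε' ^ 2 / δ' := by field_simp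

theorem stmt_0 (δ' ε' : ℝ)
    (hδ0 : 0 < δ') (hδ : δ' ≤ 1/2)
    (hε0 : 0 ≤ ε') (hε : ε' ≤ 1 - 2*δ')
    (hpos1 : 0 < δ' + ε') (hpos2 : 0 < 1 - δ' - ε') :
    δ' * Real.log (δ' / (δ' + ε')) + (1 - δ') * Real.log ((1 - δ') / (1 - δ' - ε'))
      ≤ 2 * ε'^2 / δ' :=
  stmt_0_general δ' ε' hδ0 hδ hε0 hε
end

section
/- Suppose $A, B \in \mathbb{R}^{d\times d}$ are positive definite with $A \succeq B$. Then for any $x \in \mathbb{R}^d$, $\|x\|_A \le \|x\|_B \cdot \sqrt{\det(A)/\det(B)}$. -/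
/-!
Conjugating by `B^{-1/2}` turns `B ≤ A` into `1 ≤ M` with `M = B^{-1/2} A B^{-1/2}` and
`det M = det A / det B`. All eigenvalues of `M` are at least `1`, so each of them is at most
their product `det M`, i.e. `M ≤ det M • 1`. Conjugating back by `B^{1/2}` gives
`A ≤ (det A / det B) • B`, and the claim is this inequality evaluated at `x`.
-/

open Matrix

open scoped MatrixOrder ComplexOrder

namespace Matrix

variable {n : Type*} [Fintype n]

lemma dotProduct_mulVec_le_of_le {𝕜 : Type*} [RCLike 𝕜] {M N : Matrix n n 𝕜} (h : M ≤ N)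
    (x : n → 𝕜) : star x ⬝ᵥ M *ᵥ x ≤ star x ⬝ᵥ N *ᵥ x := by
  simpa [sub_mulVec, dotProduct_sub] using (le_iff.mp h).dotProduct_mulVec_nonneg x

variable [DecidableEq n]

lemma le_det_smul_one_of_one_le {M : Matrix n n ℝ} (hM : 1 ≤ M) : M ≤ M.det • 1 := by
  have hH : M.IsHermitian := (zero_le_one.trans hM).posSemidef.isHermitian
  have one_le : ∀ i, 1 ≤ hH.eigenvalues i := by
    have := (algebraMap_le_iff_le_spectrum (r := (1 : ℝ)) hH.isSelfAdjoint).1 (by simpa using hM)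
    simpa [hH.spectrum_real_eq_range_eigenvalues] using this
  rw [← Algebra.algebraMap_eq_smul_one, le_algebraMap_iff_spectrum_le hH.isSelfAdjoint,
    hH.spectrum_real_eq_range_eigenvalues, Set.forall_mem_range, hH.det_eq_prod_eigenvalues]
  intro i
  simpa using Finset.prod_le_prod_of_subset_of_one_le (Finset.subset_univ {i})
    (fun j _ ↦ zero_le_one.trans (one_le j)) (fun j _ _ ↦ one_le j)

lemma det_conjSqrt {c : Matrix n n ℝ} (hc : 0 ≤ c) (a : Matrix n n ℝ) :
    (CFC.conjSqrt c a).det = c.det * a.det := by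
  rw [CFC.conjSqrt_apply, det_mul, det_mul, mul_right_comm, ← det_mul, CFC.sqrt_mul_sqrt_self c hc]

lemma le_det_div_det_smul_of_le {A B : Matrix n n ℝ} (hB : B.PosDef) (hBA : B ≤ A) :
    A ≤ (A.det / B.det) • B := by
  have hB' := hB.isStrictlyPositive
  set M := CFC.conjSqrt (Ring.inverse B) A
  have hM : 1 ≤ M := CFC.conjSqrt_ringInverse_self B ▸ CFC.conjSqrt_le_conjSqrt hBA
  have hdet : M.det = A.det / B.det := by
    rw [det_conjSqrt hB'.ringInverse.nonneg, ← nonsing_inv_eq_ringInverse, det_nonsing_inv,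
      Ring.inverse_eq_inv', inv_mul_eq_div]
  calc A = CFC.conjSqrt B M := (CFC.conjSqrt_conjSqrt_ringInverse B A).symm
    _ ≤ CFC.conjSqrt B (M.det • 1) := CFC.conjSqrt_le_conjSqrt (le_det_smul_one_of_one_le hM)
    _ = (A.det / B.det) • B := by rw [map_smul, CFC.conjSqrt_one B, hdet]

end Matrix

theorem stmt_14_general (d : ℕ) (A B : Matrix (Fin d) (Fin d) ℝ)
    (hB : B.PosDef) (hAB : (A - B).PosSemidef)
    (x : Fin d → ℝ) :
    Real.sqrt (x ⬝ᵥ A.mulVec x)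
      ≤ Real.sqrt (x ⬝ᵥ B.mulVec x) * Real.sqrt (A.det / B.det) := by
  have hquad : x ⬝ᵥ A *ᵥ x ≤ x ⬝ᵥ B *ᵥ x * (A.det / B.det) := by
    simpa [smul_mulVec, dotProduct_smul, mul_comm] using
      dotProduct_mulVec_le_of_le (le_det_div_det_smul_of_le hB (le_iff.mpr hAB)) x
  calc √(x ⬝ᵥ A *ᵥ x) ≤ √(x ⬝ᵥ B *ᵥ x * (A.det / B.det)) := Real.sqrt_le_sqrt hquad
    _ = √(x ⬝ᵥ B *ᵥ x) * √(A.det / B.det) := by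
      refine Real.sqrt_mul ?_ _
      simpa using hB.posSemidef.dotProduct_mulVec_nonneg x

/-- Lemma 12 of Abbasi-Yadkori et al. 2011. -/
theorem stmt_14 (d : ℕ) (A B : Matrix (Fin d) (Fin d) ℝ)
    (hA : A.PosDef) (hB : B.PosDef) (hAB : (A - B).PosSemidef)
    (x : Fin d → ℝ) :
    Real.sqrt (x ⬝ᵥ A.mulVec x)
      ≤ Real.sqrt (x ⬝ᵥ B.mulVec x) * Real.sqrt (A.det / B.det) :=
  stmt_14_general d A B hB hAB x
end
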